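/- arXiv:2510.02961 — 4 statements merged into one kernel-verified Lean document; each statement's English description precedes it below -/
import Mathlib

section
/- For a finite graph G with edge set E, Ising spin configurations σ : V → {-1,1}, and a bond probability p = 1 - e^{-2βJ} with βJ ≥ 0, the Boltzmann factor factorizes as ∏_{(i,j)∈E} e^{βJ(σᵢσⱼ-1)} = ∑_{C ⊆ E} p^{|C|}(1-p)^{|E∖C|} ∏_{(i,j)∈C} [σᵢ = σⱼ]. -/
open Finset

/-- Fortuin–Kasteleyn expansion of the Ising Boltzmann factor for a fixed spin
configuration: the product over edges of `e^{βJ(σᵢσⱼ-1)}` equals the sum over all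
subsets `C` of the edge set of `p^{|C|} (1-p)^{|E∖C|} ∏_{(i,j)∈C} [σᵢ = σⱼ]`,
where `p = 1 - e^{-2βJ}`. -/
theorem stmt1 {V : Type*} [Fintype V] [DecidableEq V] (E : Finset (V × V))
    (σ : V → ℝ) (hσ : ∀ v, σ v = -1 ∨ σ v = 1) (β J : ℝ) (hβJ : 0 ≤ β * J) :
    (∏ e ∈ E, Real.exp (β * J * (σ e.1 * σ e.2 - 1))) =
      ∑ C ∈ E.powerset,
        (1 - Real.exp (-(2 * β * J))) ^ C.card *
          (1 - (1 - Real.exp (-(2 * β * J)))) ^ (E \ C).card *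
          ∏ e ∈ C, (if σ e.1 = σ e.2 then (1 : ℝ) else 0) := by
  have key : ∀ e ∈ E, Real.exp (β * J * (σ e.1 * σ e.2 - 1)) =
      (1 - Real.exp (-(2 * β * J))) * (if σ e.1 = σ e.2 then (1:ℝ) else 0) +
        (1 - (1 - Real.exp (-(2 * β * J)))) := by
    intro e _
    rcases hσ e.1 with h1 | h1 <;> rcases hσ e.2 with h2 | h2 <;>
      simp [h1, h2] <;> ring_nf <;> norm_num
  rw [Finset.prod_congr rfl key, Finset.prod_add]
  refine Finset.sum_congr rfl fun C hC => ?_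
  rw [Finset.prod_mul_distrib, Finset.prod_const, Finset.prod_const]
  ring
end

section
/- For a finite graph G with edge set E and bond weight p = 1 - e^{-2βJ}, the Ising partition function satisfies Z := ∑_{σ : V → {-1,1}} ∏_{(i,j)∈E} e^{βJ(σᵢσⱼ-1)} = ∑_{C ⊆ E} 2^{k(C)} p^{|C|} (1-p)^{|E∖C|}, where k(C) is the number of connected components of the graph (V, C). -/
open Finset

/-- The spin value associated to a Boolean: `true ↦ 1`, `false ↦ -1`. -/
def spin (b : Bool) : ℝ := if b then 1 else -1

/-- The simple graph on `V` whose edges are the (symmetrizations of the) pairs in `C`. -/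
def graphOf {V : Type*} (C : Finset (V × V)) : SimpleGraph V :=
  SimpleGraph.fromEdgeSet ((fun p : V × V => s(p.1, p.2)) '' (C : Set (V × V)))

/-- The number of connected components `k(C)` of the spanning subgraph `(V, C)`. -/
noncomputable def numComponents {V : Type*} (C : Finset (V × V)) : ℕ :=
  Nat.card (graphOf C).ConnectedComponent

section aux
variable {V : Type*} [Fintype V] [DecidableEq V]

omit [Fintype V] [DecidableEq V] in
lemma walk_const {G : SimpleGraph V} {β : Sort*} {f : V → β}
    (h : ∀ a b, G.Adj a b → f a = f b) : ∀ {v w : V}, G.Walk v w → f v = f w := by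
  intro v w p
  induction p with
  | nil => rfl
  | cons hadj _ ih => exact (h _ _ hadj).trans ih

omit [Fintype V] [DecidableEq V] in
lemma adj_of_mem {C : Finset (V × V)} {e : V × V} (he : e ∈ C) (hne : e.1 ≠ e.2) :
    (graphOf C).Adj e.1 e.2 := by
  rw [graphOf, SimpleGraph.fromEdgeSet_adj]
  exact ⟨⟨e, he, rfl⟩, hne⟩

omit [Fintype V] [DecidableEq V] in
lemma sigma_eq_of_adj {C : Finset (V × V)} {σ : V → Bool}
    (hσ : ∀ e ∈ C, σ e.1 = σ e.2) {a b : V} (hab : (graphOf C).Adj a b) : σ a = σ b := by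
  rw [graphOf, SimpleGraph.fromEdgeSet_adj] at hab
  obtain ⟨⟨⟨x, y⟩, hxy, hs⟩, _⟩ := hab
  rw [Sym2.eq_iff] at hs
  rcases hs with ⟨rfl, rfl⟩ | ⟨rfl, rfl⟩
  · exact hσ _ hxy
  · exact (hσ _ hxy).symm

noncomputable def constEquiv (C : Finset (V × V)) :
    {σ : V → Bool // ∀ e ∈ C, σ e.1 = σ e.2} ≃ ((graphOf C).ConnectedComponent → Bool) where
  toFun σ := Quot.lift σ.1 fun a b (h : (graphOf C).Reachable a b) =>
    h.elim fun p => walk_const (fun _ _ => sigma_eq_of_adj σ.2) p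
  invFun f := ⟨fun v => f ((graphOf C).connectedComponentMk v), by
    intro e he
    by_cases hne : e.1 = e.2
    · rw [hne]
    · simp only []
      congr 1
      exact SimpleGraph.ConnectedComponent.connectedComponentMk_eq_of_adj (adj_of_mem he hne)⟩
  left_inv σ := rfl
  right_inv f := by
    funext c
    induction c using SimpleGraph.ConnectedComponent.ind
    rfl

lemma card_const (C : Finset (V × V)) :
    (univ.filter fun σ : V → Bool => ∀ e ∈ C, σ e.1 = σ e.2).card = 2 ^ numComponents C := by
  rw [← Fintype.card_subtype]
  have h1 : Fintype.card {σ : V → Bool // ∀ e ∈ C, σ e.1 = σ e.2}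
      = Nat.card {σ : V → Bool // ∀ e ∈ C, σ e.1 = σ e.2} := (Nat.card_eq_fintype_card).symm
  rw [h1, Nat.card_congr (constEquiv C), Nat.card_fun, Nat.card_eq_fintype_card (α := Bool),
    Fintype.card_bool, numComponents]

end aux

/-- Fortuin–Kasteleyn random-cluster representation (q = 2) of the Ising partition
function: `Z = ∑_σ ∏_{(i,j)∈E} e^{βJ(σᵢσⱼ-1)} = ∑_{C ⊆ E} 2^{k(C)} p^{|C|} (1-p)^{|E∖C|}`
with `p = 1 - e^{-2βJ}`. -/
theorem stmt2 {V : Type*} [Fintype V] [DecidableEq V] (E : Finset (V × V)) (β J : ℝ) :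
    (∑ σ : V → Bool,
        ∏ e ∈ E, Real.exp (β * J * (spin (σ e.1) * spin (σ e.2) - 1))) =
      ∑ C ∈ E.powerset,
        (2 : ℝ) ^ numComponents C *
          (1 - Real.exp (-(2 * β * J))) ^ C.card *
          (1 - (1 - Real.exp (-(2 * β * J)))) ^ (E \ C).card := by
  set p : ℝ := 1 - Real.exp (-(2 * β * J)) with hp
  have hedge : ∀ (σ : V → Bool) (e : V × V),
      Real.exp (β * J * (spin (σ e.1) * spin (σ e.2) - 1))
        = p * (if σ e.1 = σ e.2 then (1 : ℝ) else 0) + (1 - p) := by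
    intro σ e
    by_cases h : σ e.1 = σ e.2
    · have hs : spin (σ e.1) * spin (σ e.2) = 1 := by rw [h]; cases σ e.2 <;> simp [spin]
      rw [hs]; simp [h]
    · have hs : spin (σ e.1) * spin (σ e.2) = -1 := by
        cases hb1 : σ e.1 <;> cases hb2 : σ e.2 <;> simp_all [spin]
      rw [hs]
      simp only [h, if_false, mul_zero, zero_add, hp, sub_sub_cancel]
      congr 1
      ring
  calc
    (∑ σ : V → Bool, ∏ e ∈ E, Real.exp (β * J * (spin (σ e.1) * spin (σ e.2) - 1)))
        = ∑ σ : V → Bool, ∑ C ∈ E.powerset,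
            (∏ e ∈ C, p * (if σ e.1 = σ e.2 then (1 : ℝ) else 0)) * (1 - p) ^ (E \ C).card := by
          refine Finset.sum_congr rfl fun σ _ => ?_
          simp_rw [hedge σ]
          rw [Finset.prod_add]
          exact Finset.sum_congr rfl fun C _ => by rw [Finset.prod_const]
    _ = ∑ C ∈ E.powerset, ∑ σ : V → Bool,
            (∏ e ∈ C, p * (if σ e.1 = σ e.2 then (1 : ℝ) else 0)) * (1 - p) ^ (E \ C).card :=
          Finset.sum_comm
    _ = ∑ C ∈ E.powerset,
          (2 : ℝ) ^ numComponents C * p ^ C.card * (1 - p) ^ (E \ C).card := by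
          refine Finset.sum_congr rfl fun C _ => ?_
          have : ∀ σ : V → Bool,
              (∏ e ∈ C, p * (if σ e.1 = σ e.2 then (1 : ℝ) else 0))
                = p ^ C.card * (if ∀ e ∈ C, σ e.1 = σ e.2 then (1 : ℝ) else 0) := by
            intro σ
            rw [Finset.prod_mul_distrib, Finset.prod_const, Finset.prod_boole]
            simp
          simp_rw [this]
          rw [← Finset.sum_mul, ← Finset.mul_sum, Finset.sum_boole, card_const C]
          push_cast
          ring
end

section
/- Let G = (V,E) be a finite graph with arbitrary real couplings J_e for each edge e, and set p_e = 1 - e^{-2βJ_e} (possibly negative). Then ∑_{σ : V → {-1,1}} ∏_{e=(i,j)∈E} e^{βJ_e(σᵢσⱼ-1)} = ∑_{C ⊆ E} 2^{k(C)} ∏_{e∈C} p_e ∏_{e∉C} (1-p_e), where k(C) is the number of connected components of (V, C). -/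
open Finset

lemma const_of_forced {V : Type*} (C : Finset (V × V)) (σ : V → Bool)
    (h : ∀ e ∈ C, σ e.1 = σ e.2) {u v : V} (huv : (graphOf C).Reachable u v) :
    σ u = σ v := by
  obtain ⟨w⟩ := huv
  induction w with
  | nil => rfl
  | cons hadj _ ih =>
    refine Eq.trans ?_ ih
    rw [graphOf, SimpleGraph.fromEdgeSet_adj] at hadj
    obtain ⟨⟨p, hpC, hp⟩, hne⟩ := hadj
    rw [Sym2.eq_iff] at hp
    rcases hp with ⟨h1, h2⟩ | ⟨h1, h2⟩
    · rw [← h1, ← h2]; exact h p hpC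
    · rw [← h1, ← h2]; exact (h p hpC).symm

noncomputable def theEquiv {V : Type*} (C : Finset (V × V)) :
    {σ : V → Bool // ∀ e ∈ C, σ e.1 = σ e.2} ≃ ((graphOf C).ConnectedComponent → Bool) where
  toFun σ := SimpleGraph.ConnectedComponent.lift σ.1
    (fun _ _ p _ => const_of_forced C σ.1 σ.2 ⟨p⟩)
  invFun f := ⟨fun v => f ((graphOf C).connectedComponentMk v), by
    intro e he
    by_cases h : e.1 = e.2
    · rw [h]
    · exact congrArg f (SimpleGraph.ConnectedComponent.sound (SimpleGraph.Adj.reachable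
        (show (graphOf C).Adj e.1 e.2 from
          (SimpleGraph.fromEdgeSet_adj _).mpr ⟨⟨e, he, rfl⟩, h⟩)))⟩
  left_inv σ := Subtype.ext rfl
  right_inv f := by
    funext c
    induction c using SimpleGraph.ConnectedComponent.ind
    rfl

lemma count_consts {V : Type*} [Fintype V] [DecidableEq V] (C : Finset (V × V)) :
    (univ.filter (fun σ : V → Bool => ∀ e ∈ C, σ e.1 = σ e.2)).card
      = 2 ^ numComponents C := by
  rw [← Fintype.card_subtype]
  rw [← Nat.card_eq_fintype_card, Nat.card_congr (theEquiv C), Nat.card_fun]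
  simp [numComponents]

lemma factor_eq (β J : ℝ) (a b : Bool) :
    Real.exp (β * J * (spin a * spin b - 1)) =
      (1 - Real.exp (-(2 * β * J))) * (if a = b then (1 : ℝ) else 0)
        + Real.exp (-(2 * β * J)) := by
  cases a <;> cases b <;> simp [spin] <;> ring_nf

/-- Generalized (frustrated) Fortuin–Kasteleyn random-cluster expansion: for arbitrary
real couplings `J e` on the edges (possibly negative, so that some
`p_e = 1 - e^{-2βJ_e}` are negative), the Ising partition function equals
`∑_{C ⊆ E} 2^{k(C)} ∏_{e∈C} p_e ∏_{e∉C} (1-p_e)` as an algebraic identity. -/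
theorem stmt3 {V : Type*} [Fintype V] [DecidableEq V] (E : Finset (V × V))
    (β : ℝ) (J : V × V → ℝ) :
    (∑ σ : V → Bool,
        ∏ e ∈ E, Real.exp (β * J e * (spin (σ e.1) * spin (σ e.2) - 1))) =
      ∑ C ∈ E.powerset,
        (2 : ℝ) ^ numComponents C *
          (∏ e ∈ C, (1 - Real.exp (-(2 * β * J e)))) *
          (∏ e ∈ E \ C, (1 - (1 - Real.exp (-(2 * β * J e))))) := by
  have key : ∀ σ : V → Bool,
      (∏ e ∈ E, Real.exp (β * J e * (spin (σ e.1) * spin (σ e.2) - 1))) =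
        ∑ C ∈ E.powerset,
          (∏ e ∈ C, (1 - Real.exp (-(2 * β * J e))) * (if σ e.1 = σ e.2 then (1:ℝ) else 0)) *
            ∏ e ∈ E \ C, Real.exp (-(2 * β * J e)) := by
    intro σ
    rw [← Finset.prod_add]
    exact Finset.prod_congr rfl fun e _ => factor_eq β (J e) _ _
  simp_rw [key]
  rw [Finset.sum_comm]
  refine Finset.sum_congr rfl fun C _ => ?_
  have h2 : ∀ σ : V → Bool,
      (∏ e ∈ C, (1 - Real.exp (-(2 * β * J e))) * (if σ e.1 = σ e.2 then (1:ℝ) else 0)) *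
        ∏ e ∈ E \ C, Real.exp (-(2 * β * J e))
      = (if ∀ e ∈ C, σ e.1 = σ e.2 then (1:ℝ) else 0) *
          ((∏ e ∈ C, (1 - Real.exp (-(2 * β * J e)))) *
            ∏ e ∈ E \ C, Real.exp (-(2 * β * J e))) := by
    intro σ
    rw [Finset.prod_mul_distrib, Finset.prod_boole, mul_right_comm]
    rw [mul_comm]
    congr
  simp_rw [h2]
  rw [← Finset.sum_mul, Finset.sum_boole, count_consts]
  simp only [sub_sub_cancel]
  push_cast
  ring
end

section
/- For a finite graph (V, C) and vertices i, j ∈ V, the sum over all spin configurations σ : V → {-1,1} of σᵢσⱼ ∏_{(u,v)∈C} [σᵤ = σᵥ] equals 2^{k(C)} if i and j lie in the same connected component of (V,C), and equals 0 otherwise, where k(C) is the number of connected components. -/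
open Finset

lemma spin_eq_iff (a b : Bool) : spin a = spin b ↔ a = b := by
  cases a <;> cases b <;> norm_num [spin]

lemma spin_mul_self (a : Bool) : spin a * spin a = 1 := by
  cases a <;> norm_num [spin]

lemma spin_not (a : Bool) : spin (!a) = - spin a := by
  cases a <;> norm_num [spin]

lemma const_of_edges {V : Type*} {C : Finset (V × V)} {σ : V → Bool}
    (h : ∀ e ∈ C, σ e.1 = σ e.2) {u v : V} (hr : (graphOf C).Reachable u v) :
    σ u = σ v := by
  obtain ⟨w⟩ := hr
  induction w with
  | nil => rfl
  | @cons a b c hadj p ih =>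
    have hab : σ a = σ b := by
      rw [graphOf, SimpleGraph.fromEdgeSet_adj] at hadj
      obtain ⟨⟨⟨p1, p2⟩, hpC, hps⟩, hne⟩ := hadj
      simp only [Sym2.eq_iff] at hps
      have := h (p1, p2) hpC
      rcases hps with ⟨h1, h2⟩ | ⟨h1, h2⟩ <;> subst h1 <;> subst h2
      · exact this
      · exact this.symm
    exact hab.trans ih

open scoped Classical in
/-- `∑_σ σᵢσⱼ ∏_{(u,v)∈C} [σᵤ = σᵥ]` equals `2^{k(C)}` if `i` and `j` lie in the same
connected component of `(V, C)`, and `0` otherwise. -/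
theorem stmt5 {V : Type*} [Fintype V] [DecidableEq V] (C : Finset (V × V)) (i j : V) :
    (∑ σ : V → Bool,
        spin (σ i) * spin (σ j) *
          ∏ e ∈ C, (if spin (σ e.1) = spin (σ e.2) then (1 : ℝ) else 0)) =
      if (graphOf C).Reachable i j then (2 : ℝ) ^ numComponents C else 0 := by
  haveI : Fintype (graphOf C).ConnectedComponent := Fintype.ofFinite _
  set G := graphOf C with hG
  have hreach : ∀ v : V, G.Reachable (G.connectedComponentMk v).out v := fun v =>
    SimpleGraph.ConnectedComponent.eq.mp (Quot.out_eq _)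
  have hsum : (∑ σ : V → Bool,
        spin (σ i) * spin (σ j) *
          ∏ e ∈ C, (if spin (σ e.1) = spin (σ e.2) then (1 : ℝ) else 0)) =
      ∑ σ ∈ Finset.univ.filter (fun σ : V → Bool => ∀ e ∈ C, σ e.1 = σ e.2),
        spin (σ i) * spin (σ j) := by
    rw [Finset.sum_filter]
    refine Finset.sum_congr rfl fun σ _ => ?_
    rw [Finset.prod_boole]
    by_cases h : ∀ e ∈ C, σ e.1 = σ e.2 <;> simp [h, spin_eq_iff]
  rw [hsum]
  have hreindex : (∑ σ ∈ Finset.univ.filter (fun σ : V → Bool => ∀ e ∈ C, σ e.1 = σ e.2),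
        spin (σ i) * spin (σ j)) =
      ∑ f : G.ConnectedComponent → Bool,
        spin (f (G.connectedComponentMk i)) * spin (f (G.connectedComponentMk j)) := by
    refine Finset.sum_nbij' (i := fun σ => fun c => σ c.out)
      (j := fun f => fun v => f (G.connectedComponentMk v)) ?_ ?_ ?_ ?_ ?_
    · intro σ _; exact Finset.mem_univ _
    · intro f _
      simp only [Finset.mem_filter, Finset.mem_univ, true_and]
      intro e he
      congr 1
      by_cases hee : e.1 = e.2
      · rw [hee]
      · exact SimpleGraph.ConnectedComponent.sound
          ⟨SimpleGraph.Adj.toWalk ((SimpleGraph.fromEdgeSet_adj _).mpr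
            ⟨⟨e, by simpa using he, rfl⟩, hee⟩)⟩
    · intro σ hσ
      simp only [Finset.mem_filter, Finset.mem_univ, true_and] at hσ
      funext v
      exact const_of_edges hσ (hreach v)
    · intro f _
      funext c
      exact congrArg f (Quot.out_eq c)
    · intro σ hσ
      simp only [Finset.mem_filter, Finset.mem_univ, true_and] at hσ
      show spin (σ i) * spin (σ j) =
        spin (σ (Quot.out (G.connectedComponentMk i))) *
          spin (σ (Quot.out (G.connectedComponentMk j)))
      rw [const_of_edges hσ (hreach i), const_of_edges hσ (hreach j)]
  rw [hreindex]
  by_cases hij : G.Reachable i j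
  · rw [if_pos hij]
    have hcc : G.connectedComponentMk i = G.connectedComponentMk j :=
      SimpleGraph.ConnectedComponent.sound hij
    rw [← hcc]
    have : ∀ f : G.ConnectedComponent → Bool,
        spin (f (G.connectedComponentMk i)) * spin (f (G.connectedComponentMk i)) = 1 :=
      fun f => spin_mul_self _
    rw [Finset.sum_congr rfl fun f _ => this f, Finset.sum_const, nsmul_eq_mul, mul_one]
    have hcard : Fintype.card (G.ConnectedComponent → Bool) =
        2 ^ numComponents C := by
      rw [Fintype.card_fun, Fintype.card_bool, numComponents, Nat.card_eq_fintype_card]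
    rw [Finset.card_univ, hcard]
    push_cast
    ring
  · rw [if_neg hij]
    have hcc : G.connectedComponentMk i ≠ G.connectedComponentMk j := fun h =>
      hij (SimpleGraph.ConnectedComponent.eq.mp h)
    refine Finset.sum_ninvolution
      (fun f => Function.update f (G.connectedComponentMk i) (! f (G.connectedComponentMk i)))
      ?_ ?_ (fun f => Finset.mem_univ _) ?_
    · intro f
      simp only [Function.update_self, Function.update_of_ne (Ne.symm hcc), spin_not]
      ring
    · intro f _ h
      have := congrFun h (G.connectedComponentMk i)
      simp at this
    · intro f
      funext c
      by_cases hc : c = G.connectedComponentMk i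
      · subst hc
        simp
      · simp [Function.update_of_ne hc]
end
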